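/- The operadic insertion is a well-defined Lie algebra homomorphism: for finite types A, B and a fixed element a ∈ A, there exists a Lie algebra homomorphism ∘_a : t̃_A × t̃_B → t̃_C, where C = {x ∈ A | x ≠ a} ⊕ B (the disjoint union of A minus a with B) and t̃_A × t̃_B carries the product Lie algebra structure, determined on the classes of the generators by: ∘_a(t_{xy}, 0) = t_{xy} and ∘_a(s_x, 0) = s_x for x, y ∈ A − {a}; ∘_a(0, t_{xy}) = t_{xy} and ∘_a(0, s_x) = s_x for x, y ∈ B; ∘_a(t_{ax}, 0) = Σ_{y ∈ B} t_{xy} for x ∈ A − {a}; and ∘_a(s_a, 0) = Σ_{x ∈ B} s_x + Σ_{{x,y} ⊆ B, x ≠ y} t_{xy} (sum over unordered pairs). -/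

import Mathlib

/-! The extended Drinfeld–Kohno Lie algebras `t̃_A` over ℚ and their operadic
insertion homomorphisms. -/

/-- Generators `t_{ab}` (for `a ≠ b`) and `s_a` of the extended Drinfeld–Kohno
Lie algebra `t̃_A`. -/
inductive ExtGen (A : Type) : Type
  | t : (a b : A) → a ≠ b → ExtGen A
  | s : A → ExtGen A

open FreeLieAlgebra in
/-- The defining relations of `t̃_A`: the infinitesimal braid relations on the `t`'s
together with the centrality of the `s_a`. -/
def extRels (A : Type) : Set (FreeLieAlgebra ℚ (ExtGen A)) :=
  {x | ∃ (a b : A) (h : a ≠ b),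
      x = of ℚ (ExtGen.t a b h) - of ℚ (ExtGen.t b a h.symm)} ∪
  {x | ∃ (a b c d : A) (h₁ : a ≠ b) (h₂ : c ≠ d),
      a ≠ c ∧ a ≠ d ∧ b ≠ c ∧ b ≠ d ∧
      x = ⁅of ℚ (ExtGen.t a b h₁), of ℚ (ExtGen.t c d h₂)⁆} ∪
  {x | ∃ (a b c : A) (hab : a ≠ b) (hbc : b ≠ c) (hac : a ≠ c),
      x = ⁅of ℚ (ExtGen.t a c hac), of ℚ (ExtGen.t a b hab) + of ℚ (ExtGen.t b c hbc)⁆} ∪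
  {x | ∃ (a : A) (g : ExtGen A), x = ⁅of ℚ (ExtGen.s a), of ℚ g⁆}

/-- The Lie ideal generated by the relations of `t̃_A`. -/
noncomputable def extIdeal (A : Type) : LieIdeal ℚ (FreeLieAlgebra ℚ (ExtGen A)) :=
  LieSubmodule.lieSpan ℚ _ (extRels A)

/-- The extended Drinfeld–Kohno Lie algebra `t̃_A`. -/
abbrev DKtTilde (A : Type) := FreeLieAlgebra ℚ (ExtGen A) ⧸ extIdeal A

/-- The class of the generator `t_{ab}` in `t̃_A`. -/
noncomputable def ttcl {A : Type} (a b : A) (h : a ≠ b) : DKtTilde A :=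
  LieSubmodule.Quotient.mk (N := extIdeal A) (FreeLieAlgebra.of ℚ (ExtGen.t a b h))

/-- The class of the generator `s_a` in `t̃_A`. -/
noncomputable def scl {A : Type} (a : A) : DKtTilde A :=
  LieSubmodule.Quotient.mk (N := extIdeal A) (FreeLieAlgebra.of ℚ (ExtGen.s a))

theorem ttcl_symm {A : Type} (a b : A) (h : a ≠ b) : ttcl a b h = ttcl b a h.symm := by
  refine (Submodule.Quotient.eq _).mpr ?_
  exact LieSubmodule.subset_lieSpan (Or.inl (Or.inl (Or.inl ⟨a, b, h, rfl⟩)))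

section ProdLie

variable {L M : Type} [LieRing L] [LieRing M]

/-- Componentwise bracket on a product. -/
instance Prod.instLieRingBracket : Bracket (L × M) (L × M) :=
  ⟨fun x y => (⁅x.1, y.1⁆, ⁅x.2, y.2⁆)⟩

@[simp] theorem Prod.bracket_def (x y : L × M) :
    ⁅x, y⁆ = (⁅x.1, y.1⁆, ⁅x.2, y.2⁆) := rfl

/-- The product of two Lie rings, with componentwise bracket. -/
instance Prod.instLieRing : LieRing (L × M) where
  add_lie x y z := by ext <;> simp
  lie_add x y z := by ext <;> simp
  lie_self x := by ext <;> simp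
  leibniz_lie x y z := by ext <;> simp

/-- The product of two Lie algebras. -/
instance Prod.instLieAlgebra (R : Type*) [CommRing R] [LieAlgebra R L] [LieAlgebra R M] :
    LieAlgebra R (L × M) where
  lie_smul t x y := by ext <;> simp

end ProdLie

/-- The image in `t̃_C` of an unordered pair of elements of `B` under an injection
`e : B → C`: the unordered pair `{x, y}` (with `x ≠ y`) is sent to the class of
`t_{e x, e y}`, and diagonal pairs are sent to `0`.  Well defined thanks to the
relation `t_{ab} = t_{ba}`. -/
noncomputable def ttclPairMap {B C : Type} [DecidableEq B] (e : B → C)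
    (he : Function.Injective e) : Sym2 B → DKtTilde C :=
  Sym2.lift ⟨fun x y => if h : x ≠ y then ttcl (e x) (e y) (fun hh => h (he hh)) else 0, by
    intro x y
    by_cases h : x = y
    · subst h; rfl
    · simp only [dif_pos h, dif_pos (Ne.symm h)]
      exact ttcl_symm _ _ _⟩

/-- `Σ_{{x,y} ⊆ B, x ≠ y} t_{e x, e y}` in `t̃_C`, the sum running over unordered
pairs of distinct elements of `B`. -/
noncomputable def pairSum {B C : Type} [Fintype B] [DecidableEq B] (e : B → C)
    (he : Function.Injective e) : DKtTilde C :=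
  ∑ p ∈ Finset.univ.filter (fun p : Sym2 B => ¬ p.IsDiag), ttclPairMap e he p

/-- The operadic insertion `∘_a : t̃_A × t̃_B → t̃_{(A−{a}) ⊔ B}` is the (unique) Lie
algebra homomorphism from the product Lie algebra satisfying these equations on the
classes of the generators. -/
def IsInsertion (A B : Type) [Fintype B] [DecidableEq B] (a : A)
    (f : DKtTilde A × DKtTilde B →ₗ⁅ℚ⁆ DKtTilde ({x : A // x ≠ a} ⊕ B)) : Prop :=
  (∀ (x y : A) (hx : x ≠ a) (hy : y ≠ a) (hxy : x ≠ y),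
      f (ttcl x y hxy, 0) =
        ttcl (Sum.inl ⟨x, hx⟩) (Sum.inl ⟨y, hy⟩)
          (fun h => hxy (congrArg Subtype.val (Sum.inl_injective h)))) ∧
  (∀ (x : A) (hx : x ≠ a), f (scl x, 0) = scl (Sum.inl ⟨x, hx⟩)) ∧
  (∀ (x y : B) (hxy : x ≠ y),
      f (0, ttcl x y hxy) =
        ttcl (Sum.inr x) (Sum.inr y) (fun h => hxy (Sum.inr_injective h))) ∧
  (∀ x : B, f (0, scl x) = scl (Sum.inr x)) ∧
  (∀ (x : A) (hx : x ≠ a) (hax : a ≠ x),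
      f (ttcl a x hax, 0) =
        ∑ y : B, ttcl (Sum.inl ⟨x, hx⟩) (Sum.inr y) (fun h => by cases h)) ∧
  (f (scl a, 0) = (∑ x : B, scl (Sum.inr x)) +
      pairSum (Sum.inr : B → {x : A // x ≠ a} ⊕ B) Sum.inr_injective)

/-!
Pairwise disjoint finite blocks `φ x ⊆ C` give a "cabling" homomorphism `t̃_A → t̃_C`,
`t_{xy} ↦ ∑_{i ∈ φ x, j ∈ φ y} t_{ij}` and `s_x ↦ ∑_{i ∈ φ x} s_i + ∑_{{i, j} ⊆ φ x} t_{ij}`.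
Most relations are respected term by term; the one real computation is that, for `u, v ∈ D`
and `p ∉ {u, v}`, the bracket of `∑_{q ∈ D} t_{pq}` with `t_{uv}` only sees `t_{pu} + t_{pv}`,
which commutes with `t_{uv}`. Summing over `p ∈ D` shows that `∑_{{i, j} ⊆ D} t_{ij}` commutes
with the `t_{uv}` inside `D` and with `∑_{i ∈ D} t_{ik}` for `k ∉ D`.

The insertion `∘_a` is the cabling of `t̃_A` along `a ↦ B`, `x ↦ {x}`, added to the cabling of
`t̃_B` along `b ↦ {b}`; their images commute since every block of the second lies in the block
of `a`.
-/

section LieGeneral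

variable {R : Type*} [CommRing R]

def LieSubalgebra.centralizer {L : Type*} [LieRing L] [LieAlgebra R L] (s : Set L) :
    LieSubalgebra R L where
  carrier := {x | ∀ y ∈ s, ⁅y, x⁆ = 0}
  add_mem' hx hy y hy' := by rw [lie_add, hx y hy', hy y hy', add_zero]
  zero_mem' _ _ := lie_zero _
  smul_mem' t _ hx y hy := by rw [lie_smul, hx y hy, smul_zero]
  lie_mem' hx hy z hz := by rw [leibniz_lie, hx z hz, hy z hz, zero_lie, lie_zero, add_zero]

theorem FreeLieAlgebra.mem_of_forall_of_mem {X : Type*} (K : LieSubalgebra R (FreeLieAlgebra R X))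
    (hK : ∀ x, of R x ∈ K) (y : FreeLieAlgebra R X) : y ∈ K := by
  let f : FreeLieAlgebra R X →ₗ⁅R⁆ K := lift R fun x => ⟨of R x, hK x⟩
  have hf : K.incl.comp f = LieHom.id := hom_ext fun x => by simp [f]
  have hy : K.incl.comp f y = y := by rw [hf, LieHom.id_apply]
  exact hy ▸ (f y).2

def LieHom.coprod {L M N : Type} [LieRing L] [LieAlgebra R L] [LieRing M] [LieAlgebra R M]
    [LieRing N] [LieAlgebra R N] (F : L →ₗ⁅R⁆ N) (G : M →ₗ⁅R⁆ N) (h : ∀ x y, ⁅F x, G y⁆ = 0) :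
    L × M →ₗ⁅R⁆ N :=
  { F.toLinearMap.comp (LinearMap.fst R L M) + G.toLinearMap.comp (LinearMap.snd R L M) with
    map_lie' := by
      rintro ⟨x₁, x₂⟩ ⟨y₁, y₂⟩
      change F ⁅x₁, y₁⁆ + G ⁅x₂, y₂⁆ = ⁅F x₁ + G x₂, F y₁ + G y₂⁆
      rw [lie_add, add_lie, add_lie, h, ← lie_skew (G x₂), h, F.map_lie, G.map_lie]
      abel }

theorem LieHom.coprod_apply {L M N : Type} [LieRing L] [LieAlgebra R L] [LieRing M]
    [LieAlgebra R M] [LieRing N] [LieAlgebra R N] (F : L →ₗ⁅R⁆ N) (G : M →ₗ⁅R⁆ N)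
    (h : ∀ x y, ⁅F x, G y⁆ = 0) (x : L × M) : LieHom.coprod F G h x = F x.1 + G x.2 := rfl

end LieGeneral

theorem Fintype.sum_sum_sym2_mk {α M : Type*} [Fintype α] [DecidableEq α] [AddCommMonoid M]
    (f : Sym2 α → M) (hf : ∀ x, f s(x, x) = 0) : ∑ x, ∑ y, f s(x, y) = 2 • ∑ z, f z := by
  rw [← Fintype.sum_prod_type']
  change ∑ p : α × α, f (Sym2.mk.uncurry p) = _
  rw [Finset.sum_comp f Sym2.mk.uncurry,
    Finset.image_univ_of_surjective Sym2.mk_surjective, Finset.smul_sum]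
  refine Finset.sum_congr rfl fun z _ => ?_
  induction z using Sym2.ind with
  | _ x y =>
    by_cases hxy : x = y
    · rw [hxy, hf, smul_zero, smul_zero]
    have : ({p | Sym2.mk.uncurry p = s(x, y)} : Finset (α × α)) = {(x, y), (y, x)} := by
      ext ⟨p, q⟩; simp [or_comm]
    rw [this, Finset.card_pair (by simp [hxy])]

open Function in
theorem Function.Injective.pairwise_disjoint_singleton {α β : Type*} {e : α → β}
    (he : Injective e) : Pairwise (Disjoint on fun x => ({e x} : Finset β)) :=
  fun _ _ h => Finset.disjoint_singleton.mpr (he.ne h)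

namespace DKtTilde

section Quotient

open FreeLieAlgebra

variable {X Y : Type} {L : Type} [LieRing L] [LieAlgebra ℚ L]

noncomputable def mk (X : Type) : FreeLieAlgebra ℚ (ExtGen X) →ₗ⁅ℚ⁆ DKtTilde X :=
  { (extIdeal X).toSubmodule.mkQ with map_lie' := rfl }

theorem mk_eq_zero_of_mem_extRels {r : FreeLieAlgebra ℚ (ExtGen X)} (hr : r ∈ extRels X) :
    mk X r = 0 :=
  LieSubmodule.Quotient.mk_eq_zero'.mpr (LieSubmodule.subset_lieSpan hr)

theorem mem_of_forall_mk_of_mem (K : LieSubalgebra ℚ (DKtTilde X))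
    (hK : ∀ g, mk X (of ℚ g) ∈ K) (x : DKtTilde X) : x ∈ K := by
  obtain ⟨y, rfl⟩ := Submodule.Quotient.mk_surjective _ x
  exact mem_of_forall_of_mem (K.comap (mk X)) hK y

theorem lie_eq_zero_of_forall_mk_of (F : DKtTilde X →ₗ⁅ℚ⁆ L) (G : DKtTilde Y →ₗ⁅ℚ⁆ L)
    (h : ∀ g g', ⁅F (mk X (of ℚ g)), G (mk Y (of ℚ g'))⁆ = 0) (x : DKtTilde X) (y : DKtTilde Y) :
    ⁅F x, G y⁆ = 0 := by
  have hgen : ∀ g, G y ∈ LieSubalgebra.centralizer (R := ℚ) {F (mk X (of ℚ g))} := fun g =>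
    mem_of_forall_mk_of_mem ((LieSubalgebra.centralizer _).comap G)
      (fun g' _ hz => (Set.mem_singleton_iff.mp hz) ▸ h g g') y
  have hx : F x ∈ LieSubalgebra.centralizer (R := ℚ) {G y} :=
    mem_of_forall_mk_of_mem ((LieSubalgebra.centralizer _).comap F)
      (fun g _ hz => by
        rw [Set.mem_singleton_iff.mp hz, ← lie_skew]; exact neg_eq_zero.mpr (hgen g _ rfl)) x
  rw [← lie_skew, hx _ rfl, neg_zero]

noncomputable def lift (f : ExtGen X → L) (hf : ∀ r ∈ extRels X, FreeLieAlgebra.lift ℚ f r = 0) :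
    DKtTilde X →ₗ⁅ℚ⁆ L :=
  { (extIdeal X).toSubmodule.liftQ (FreeLieAlgebra.lift ℚ f).toLinearMap
      ((LieSubmodule.lieSpan_le (N := (FreeLieAlgebra.lift ℚ f).ker)).mpr
        fun r hr => LieHom.mem_ker.mpr (hf r hr)) with
    map_lie' := by
      rintro ⟨x⟩ ⟨y⟩
      exact (FreeLieAlgebra.lift ℚ f).map_lie x y }

theorem lift_mk_of (f : ExtGen X → L) (hf : ∀ r ∈ extRels X, FreeLieAlgebra.lift ℚ f r = 0)
    (g : ExtGen X) : lift f hf (mk X (of ℚ g)) = f g :=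
  lift_of_apply f g

end Quotient

section Relations

variable {C : Type}

open Classical in
/-- `t_{ij}`, extended by `t_{ii} = 0`: with this convention the braid relations below hold
without side conditions on coincident indices. -/
noncomputable def tt (i j : C) : DKtTilde C := if h : i = j then 0 else ttcl i j h

theorem tt_self (i : C) : tt i i = 0 := dif_pos rfl

theorem tt_of_ne {i j : C} (h : i ≠ j) : tt i j = ttcl i j h := dif_neg h

theorem tt_comm (i j : C) : tt i j = tt j i := by
  by_cases h : i = j
  · rw [h]
  · rw [tt_of_ne h, tt_of_ne (Ne.symm h), ttcl_symm]

theorem scl_lie (c : C) (w : DKtTilde C) : ⁅scl c, w⁆ = 0 :=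
  mem_of_forall_mk_of_mem (LieSubalgebra.centralizer {scl c})
    (fun g _ hz => (Set.mem_singleton_iff.mp hz) ▸
      mk_eq_zero_of_mem_extRels (Or.inr ⟨c, g, rfl⟩)) w _ rfl

theorem lie_scl (c : C) (w : DKtTilde C) : ⁅w, scl c⁆ = 0 := by
  rw [← lie_skew, scl_lie, neg_zero]

theorem lie_tt_tt {a b c d : C} (hac : a ≠ c) (had : a ≠ d) (hbc : b ≠ c) (hbd : b ≠ d) :
    ⁅tt a b, tt c d⁆ = 0 := by
  by_cases hab : a = b
  · rw [hab, tt_self, zero_lie]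
  by_cases hcd : c = d
  · rw [hcd, tt_self, lie_zero]
  rw [tt_of_ne hab, tt_of_ne hcd]
  exact mk_eq_zero_of_mem_extRels
    (Or.inl (Or.inl (Or.inr ⟨a, b, c, d, hab, hcd, hac, had, hbc, hbd, rfl⟩)))

theorem lie_tt_add_tt (a b c : C) : ⁅tt a c, tt a b + tt b c⁆ = 0 := by
  by_cases hac : a = c
  · rw [hac, tt_self, zero_lie]
  by_cases hab : a = b
  · rw [hab, tt_self, zero_add, lie_self]
  by_cases hbc : b = c
  · rw [hbc, tt_self, add_zero, lie_self]
  rw [tt_of_ne hac, tt_of_ne hab, tt_of_ne hbc]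
  exact mk_eq_zero_of_mem_extRels (Or.inl (Or.inr ⟨a, b, c, hab, hbc, hac, rfl⟩))

noncomputable def tSum (X Y : Finset C) : DKtTilde C := ∑ i ∈ X, ∑ j ∈ Y, tt i j

/-- `tSum X X` counts every pair `{i, j} ⊆ X` of distinct elements twice. -/
noncomputable def sSum (X : Finset C) : DKtTilde C := ∑ i ∈ X, scl i + (2⁻¹ : ℚ) • tSum X X

theorem tSum_comm (X Y : Finset C) : tSum X Y = tSum Y X := by
  rw [tSum, tSum, Finset.sum_comm]
  simp_rw [tt_comm]

theorem tSum_singleton (i j : C) : tSum {i} {j} = tt i j := by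
  simp [tSum]

theorem sSum_singleton (i : C) : sSum {i} = scl i := by
  simp [sSum, tSum_singleton, tt_self]

theorem sSum_lie (X : Finset C) (w : DKtTilde C) :
    ⁅sSum X, w⁆ = (2⁻¹ : ℚ) • ⁅tSum X X, w⁆ := by
  simp [sSum, sum_lie, scl_lie]

theorem lie_sSum (X : Finset C) (w : DKtTilde C) :
    ⁅w, sSum X⁆ = (2⁻¹ : ℚ) • ⁅w, tSum X X⁆ := by
  simp [sSum, lie_sum, lie_scl]

theorem lie_tSum_tSum {X Y Z W : Finset C} (hXZ : Disjoint X Z) (hXW : Disjoint X W)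
    (hYZ : Disjoint Y Z) (hYW : Disjoint Y W) : ⁅tSum X Y, tSum Z W⁆ = 0 := by
  rw [tSum, sum_lie]
  refine Finset.sum_eq_zero fun i hi => ?_
  rw [sum_lie]
  refine Finset.sum_eq_zero fun j hj => ?_
  rw [tSum, lie_sum]
  refine Finset.sum_eq_zero fun k hk => ?_
  rw [lie_sum]
  exact Finset.sum_eq_zero fun l hl => lie_tt_tt (hXZ.forall_ne_finset hi hk)
    (hXW.forall_ne_finset hi hl) (hYZ.forall_ne_finset hj hk) (hYW.forall_ne_finset hj hl)

/-- Only `t_{pu} + t_{pv}` survives in the bracket, and it commutes with `t_{uv}`. -/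
theorem sum_tt_lie_tt {D : Finset C} {p u v : C} (hu : u ∈ D) (hv : v ∈ D) (hpu : p ≠ u)
    (hpv : p ≠ v) : ⁅∑ q ∈ D, tt p q, tt u v⁆ = 0 := by
  by_cases huv : u = v
  · rw [huv, tt_self, lie_zero]
  rw [sum_lie, Finset.sum_eq_add_of_mem u v hu hv huv
    fun q _ hq => lie_tt_tt hpu hpv hq.1 hq.2,
    ← add_lie, ← lie_skew, tt_comm p u, lie_tt_add_tt, neg_zero]

theorem tSum_self_lie_tt {X : Finset C} {u v : C} (hu : u ∈ X) (hv : v ∈ X) :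
    ⁅tSum X X, tt u v⁆ = 0 := by
  by_cases huv : u = v
  · rw [huv, tt_self, lie_zero]
  rw [tSum, sum_lie, Finset.sum_eq_add_of_mem u v hu hv huv
    fun p _ hp => sum_tt_lie_tt hu hv hp.1 hp.2, ← add_lie,
    ← Finset.sum_add_distrib, sum_lie]
  refine Finset.sum_eq_zero fun q _ => ?_
  rw [← lie_skew, tt_comm v q, lie_tt_add_tt, neg_zero]

theorem tSum_lie_tt {X Y : Finset C} (hXY : Disjoint X Y) {u v : C} (hu : u ∈ X) (hv : v ∈ X) :
    ⁅tSum X Y, tt u v⁆ = 0 := by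
  rw [tSum_comm, tSum, sum_lie]
  exact Finset.sum_eq_zero fun k hk => sum_tt_lie_tt hu hv
    (hXY.forall_ne_finset hu hk).symm (hXY.forall_ne_finset hv hk).symm

theorem tSum_self_lie_tSum {X Z : Finset C} (hXZ : Disjoint X Z) :
    ⁅tSum X X, tSum X Z⁆ = 0 := by
  rw [tSum_comm X Z]
  change ⁅tSum X X, ∑ k ∈ Z, ∑ i ∈ X, tt k i⁆ = 0
  rw [lie_sum]
  refine Finset.sum_eq_zero fun k hk => ?_
  rw [← lie_skew, neg_eq_zero, tSum, lie_sum]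
  refine Finset.sum_eq_zero fun p hp => ?_
  rw [lie_sum]
  exact Finset.sum_eq_zero fun q hq => sum_tt_lie_tt hp hq
    (hXZ.forall_ne_finset hp hk).symm (hXZ.forall_ne_finset hq hk).symm

theorem tSum_lie_tSum_add_tSum {X Y Z : Finset C} (hXY : Disjoint X Y) (hYZ : Disjoint Y Z)
    (hXZ : Disjoint X Z) : ⁅tSum X Z, tSum X Y + tSum Y Z⁆ = 0 := by
  rw [tSum, sum_lie]
  refine Finset.sum_eq_zero fun i hi => ?_
  rw [sum_lie]
  refine Finset.sum_eq_zero fun k hk => ?_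
  have hXY' : ⁅tt i k, tSum X Y⁆ = ∑ j ∈ Y, ⁅tt i k, tt i j⁆ := by
    rw [tSum, lie_sum, Finset.sum_eq_single i ?_ (absurd hi), lie_sum]
    intro i' hi' hne
    rw [lie_sum]
    exact Finset.sum_eq_zero fun j hj => lie_tt_tt hne.symm (hXY.forall_ne_finset hi hj)
      (hXZ.forall_ne_finset hi' hk).symm (hYZ.forall_ne_finset hj hk).symm
  have hYZ' : ⁅tt i k, tSum Y Z⁆ = ∑ j ∈ Y, ⁅tt i k, tt j k⁆ := by
    rw [tSum, lie_sum]
    refine Finset.sum_congr rfl fun j hj => ?_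
    rw [lie_sum, Finset.sum_eq_single k ?_ (absurd hk)]
    intro k' hk' hne
    exact lie_tt_tt (hXY.forall_ne_finset hi hj) (hXZ.forall_ne_finset hi hk')
      (hYZ.forall_ne_finset hj hk).symm hne.symm
  rw [lie_add, hXY', hYZ', ← Finset.sum_add_distrib]
  exact Finset.sum_eq_zero fun j _ => by rw [← lie_add, lie_tt_add_tt]

end Relations

section Cabling

open FreeLieAlgebra Function

variable {A C : Type} (φ : A → Finset C)

noncomputable def cablingGen : ExtGen A → DKtTilde C
  | .t x y _ => tSum (φ x) (φ y)
  | .s x => sSum (φ x)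

variable {φ}

theorem tSum_self_lie_cablingGen (hφ : Pairwise (Disjoint on φ)) (x : A) (g : ExtGen A) :
    ⁅tSum (φ x) (φ x), cablingGen φ g⁆ = 0 := by
  cases g with
  | t y z hyz =>
    change ⁅tSum (φ x) (φ x), tSum (φ y) (φ z)⁆ = 0
    by_cases hxy : x = y
    · rw [hxy]; exact tSum_self_lie_tSum (hφ hyz)
    by_cases hxz : x = z
    · rw [hxz, tSum_comm (φ y)]; exact tSum_self_lie_tSum (hφ (Ne.symm hyz))
    exact lie_tSum_tSum (hφ hxy) (hφ hxz) (hφ hxy) (hφ hxz)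
  | s y =>
    change ⁅tSum (φ x) (φ x), sSum (φ y)⁆ = 0
    by_cases hxy : x = y
    · rw [hxy, lie_sSum, lie_self, smul_zero]
    rw [lie_sSum, lie_tSum_tSum (hφ hxy) (hφ hxy) (hφ hxy) (hφ hxy), smul_zero]

theorem lift_cablingGen_extRels (hφ : Pairwise (Disjoint on φ)) :
    ∀ r ∈ extRels A, FreeLieAlgebra.lift ℚ (cablingGen φ) r = 0 := by
  rintro r (((⟨x, y, _, rfl⟩ | ⟨x, y, z, w, _, _, hxz, hxw, hyz, hyw, rfl⟩) |
    ⟨x, y, z, hxy, hyz, hxz, rfl⟩) | ⟨x, g, rfl⟩) <;>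
    simp only [map_sub, map_add, LieHom.map_lie, lift_of_apply]
  · exact sub_eq_zero.mpr (tSum_comm _ _)
  · exact lie_tSum_tSum (hφ hxz) (hφ hxw) (hφ hyz) (hφ hyw)
  · exact tSum_lie_tSum_add_tSum (hφ hxy) (hφ hyz) (hφ hxz)
  · rw [cablingGen, sSum_lie, tSum_self_lie_cablingGen hφ, smul_zero]

variable (φ) in
noncomputable def cabling (hφ : Pairwise (Disjoint on φ)) : DKtTilde A →ₗ⁅ℚ⁆ DKtTilde C :=
  lift (cablingGen φ) (lift_cablingGen_extRels hφ)

theorem cabling_ttcl (hφ : Pairwise (Disjoint on φ)) {x y : A} (h : x ≠ y) :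
    cabling φ hφ (ttcl x y h) = tSum (φ x) (φ y) :=
  lift_mk_of _ _ (.t x y h)

theorem cabling_scl (hφ : Pairwise (Disjoint on φ)) (x : A) :
    cabling φ hφ (scl x) = sSum (φ x) :=
  lift_mk_of _ _ (.s x)

theorem cablingGen_lie_tt (hφ : Pairwise (Disjoint on φ)) {a : A} {u v : C} (hu : u ∈ φ a)
    (hv : v ∈ φ a) (g : ExtGen A) : ⁅cablingGen φ g, tt u v⁆ = 0 := by
  have hsep : ∀ {x}, x ≠ a → Disjoint (φ x) {u} ∧ Disjoint (φ x) {v} := fun hx =>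
    ⟨Finset.disjoint_singleton_right.mpr fun h => Finset.disjoint_left.mp (hφ hx) h hu,
      Finset.disjoint_singleton_right.mpr fun h => Finset.disjoint_left.mp (hφ hx) h hv⟩
  cases g with
  | t x y hxy =>
    change ⁅tSum (φ x) (φ y), tt u v⁆ = 0
    by_cases hx : x = a
    · subst hx; exact tSum_lie_tt (hφ hxy) hu hv
    by_cases hy : y = a
    · subst hy; rw [tSum_comm]; exact tSum_lie_tt (hφ (Ne.symm hxy)) hu hv
    rw [← tSum_singleton]
    exact lie_tSum_tSum (hsep hx).1 (hsep hx).2 (hsep hy).1 (hsep hy).2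
  | s x =>
    change ⁅sSum (φ x), tt u v⁆ = 0
    rw [sSum_lie]
    by_cases hx : x = a
    · subst hx; rw [tSum_self_lie_tt hu hv, smul_zero]
    rw [← tSum_singleton, lie_tSum_tSum (hsep hx).1 (hsep hx).2 (hsep hx).1 (hsep hx).2,
      smul_zero]

theorem cablingGen_lie_tSum (hφ : Pairwise (Disjoint on φ)) {a : A} {Y Z : Finset C}
    (hY : Y ⊆ φ a) (hZ : Z ⊆ φ a) (g : ExtGen A) : ⁅cablingGen φ g, tSum Y Z⁆ = 0 := by
  rw [tSum, lie_sum]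
  exact Finset.sum_eq_zero fun u hu => by
    rw [lie_sum]
    exact Finset.sum_eq_zero fun v hv => cablingGen_lie_tt hφ (hY hu) (hZ hv) g

theorem cabling_lie_cabling {B : Type} {ψ : B → Finset C} (hφ : Pairwise (Disjoint on φ))
    (hψ : Pairwise (Disjoint on ψ)) {a : A} (hψa : ∀ b, ψ b ⊆ φ a) (x : DKtTilde A)
    (y : DKtTilde B) : ⁅cabling φ hφ x, cabling ψ hψ y⁆ = 0 := by
  refine lie_eq_zero_of_forall_mk_of _ _ (fun g g' => ?_) x y
  rw [cabling, cabling, lift_mk_of, lift_mk_of]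
  cases g' with
  | t u v _ => exact cablingGen_lie_tSum hφ (hψa u) (hψa v) g
  | s u => rw [cablingGen, lie_sSum, cablingGen_lie_tSum hφ (hψa u) (hψa u) g, smul_zero]

end Cabling

section Insertion

theorem ttclPairMap_mk {B C : Type} [DecidableEq B] {e : B → C} (he : Function.Injective e)
    (x y : B) : ttclPairMap e he s(x, y) = tt (e x) (e y) := by
  by_cases hxy : x = y
  · simp [ttclPairMap, hxy, tt_self]
  · simp [ttclPairMap, hxy, tt_of_ne (he.ne hxy)]

theorem pairSum_eq {B C : Type} [Fintype B] [DecidableEq B] {e : B → C}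
    (he : Function.Injective e) :
    pairSum e he = (2⁻¹ : ℚ) • tSum (Finset.univ.map ⟨e, he⟩) (Finset.univ.map ⟨e, he⟩) := by
  have hsum : tSum (Finset.univ.map ⟨e, he⟩) (Finset.univ.map ⟨e, he⟩)
      = 2 • ∑ z, ttclPairMap e he z := by
    simp only [tSum, Finset.sum_map, Function.Embedding.coeFn_mk, ← ttclPairMap_mk he]
    exact Fintype.sum_sum_sym2_mk _ fun x => by rw [ttclPairMap_mk, tt_self]
  have hdiag : ∀ z ∈ Finset.univ, ttclPairMap e he z ≠ 0 → ¬ z.IsDiag := by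
    intro z _ h hz
    induction z using Sym2.ind with
    | _ x y => rw [Sym2.mk_isDiag_iff.mp hz, ttclPairMap_mk, tt_self] at h; exact h rfl
  rw [hsum, pairSum, Finset.sum_filter_of_ne hdiag, ← Nat.cast_smul_eq_nsmul ℚ, smul_smul]
  norm_num

open Function

variable {A B : Type} [DecidableEq A] [Fintype B]

def insertionBlocks (a : A) (x : A) : Finset ({x : A // x ≠ a} ⊕ B) :=
  if hx : x = a then Finset.univ.map .inr else {.inl ⟨x, hx⟩}

theorem insertionBlocks_self (a : A) :
    insertionBlocks (B := B) a a = Finset.univ.map .inr := dif_pos rfl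

theorem insertionBlocks_of_ne {a x : A} (hx : x ≠ a) :
    insertionBlocks (B := B) a x = {.inl ⟨x, hx⟩} := dif_neg hx

theorem pairwise_disjoint_insertionBlocks (a : A) :
    Pairwise (Disjoint on insertionBlocks (B := B) a) := by
  intro x y hxy
  by_cases hx : x = a
  · subst hx
    simp [onFun, insertionBlocks_self, insertionBlocks_of_ne (Ne.symm hxy)]
  by_cases hy : y = a
  · subst hy
    simp [onFun, insertionBlocks_self, insertionBlocks_of_ne hxy]
  simp [onFun, insertionBlocks_of_ne hx, insertionBlocks_of_ne hy, hxy]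

end Insertion

end DKtTilde

open DKtTilde in
theorem insertion_exists_general (A B : Type) [Fintype B] [DecidableEq A]
    [DecidableEq B] (a : A) :
    ∃ f : DKtTilde A × DKtTilde B →ₗ⁅ℚ⁆ DKtTilde ({x : A // x ≠ a} ⊕ B),
      IsInsertion A B a f := by
  have hA := pairwise_disjoint_insertionBlocks (B := B) a
  have hB := Function.Injective.pairwise_disjoint_singleton
    (Sum.inr_injective (α := {x : A // x ≠ a}) (β := B))
  have hBA : ∀ b, {Sum.inr b} ⊆ insertionBlocks (B := B) a a := fun b => by
    simp [insertionBlocks_self]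
  refine ⟨LieHom.coprod (cabling _ hA) (cabling _ hB) (cabling_lie_cabling hA hB hBA),
    ?_, ?_, ?_, ?_, ?_, ?_⟩ <;> simp only [LieHom.coprod_apply, map_zero, add_zero, zero_add]
  · intro x y hx hy hxy
    rw [cabling_ttcl, insertionBlocks_of_ne hx, insertionBlocks_of_ne hy, tSum_singleton,
      tt_of_ne]
  · intro x hx
    rw [cabling_scl, insertionBlocks_of_ne hx, sSum_singleton]
  · intro x y hxy
    rw [cabling_ttcl, tSum_singleton, tt_of_ne]
  · intro x
    rw [cabling_scl, sSum_singleton]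
  · intro x hx hax
    rw [cabling_ttcl, insertionBlocks_self, insertionBlocks_of_ne hx, tSum_comm, tSum,
      Finset.sum_singleton, Finset.sum_map]
    exact Finset.sum_congr rfl fun b _ => tt_of_ne _
  · rw [cabling_scl, insertionBlocks_self, sSum, Finset.sum_map, pairSum_eq]
    rfl

/-- the operadic insertion exists, i.e. there is a Lie algebra
homomorphism `∘_a : t̃_A × t̃_B → t̃_{(A−{a}) ⊔ B}` taking the prescribed values on
the classes of the generators. -/
theorem insertion_exists (A B : Type) [Fintype A] [Fintype B] [DecidableEq A]
    [DecidableEq B] (a : A) :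
    ∃ f : DKtTilde A × DKtTilde B →ₗ⁅ℚ⁆ DKtTilde ({x : A // x ≠ a} ⊕ B),
      IsInsertion A B a f :=
  insertion_exists_general A B a
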